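/- (Bakhvalov's trick) Let q, n ∈ ℕ, and let (G_j)_{j=1,…,2n} be an independent family of random variables each uniformly distributed on D^(q) = {k/2^q + 1/2^(q+1) : 0 ≤ k < 2^q}. Define H_{(j1,j2)} = G_{j1} + G_{j2+n} + 2^{-(q+1)} mod 1 for j1, j2 ∈ {1,…,n}. Then the family (H_{(j1,j2)})_{j1,j2=1,…,n} of n² random variables is pairwise independent and each H_{(j1,j2)} is uniformly distributed on D^(q). -/

import Mathlib

/-
If `X` is uniform on a finite abelian group and independent of `Y`, then `X + f Y` is again
uniform and independent of `Y`. Hence, for independent uniform `K`'s, two sums `K a + K b` and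
`K c + K d` over different index pairs are independent: when they share an index, say `a = c`,
take `X = K b` and `Y = (K a, K d)`; otherwise they depend on disjoint sets of variables.
Indexing `D^(q)` by `ZMod (2^q)` through `k ↦ k/2^q + 1/2^(q+1)` turns
`x, y ↦ fract (x + y + 2^{-(q+1)})` into `k, l ↦ k + l + 1`, which carries this over to the `H`'s.
-/

open ProbabilityTheory

/-- The set `D^(q)` of dyadic midpoints `{k/2^q + 1/2^(q+1) : k = 0,…,2^q − 1}`. -/
noncomputable def Dq (q : ℕ) : Finset ℝ :=
  (Finset.range (2 ^ q)).image (fun k : ℕ => (k : ℝ) / 2 ^ q + 1 / 2 ^ (q + 1))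

open MeasureTheory
open scoped ENNReal

noncomputable def cellMid (N : ℕ) (k : ZMod N) : ℝ := k.val / N + 1 / (2 * N)

noncomputable def cellIndex (N : ℕ) (x : ℝ) : ZMod N := ⌊x * N⌋₊

section Cells

variable {N : ℕ} [NeZero N]

theorem cellIndex_cellMid (k : ZMod N) : cellIndex N (cellMid N k) = k := by
  have hN : (0 : ℝ) < N := Nat.cast_pos.2 (NeZero.pos N)
  have hscale : cellMid N k * N = k.val + 1 / 2 := by
    rw [cellMid]; field_simp
  have hfloor : ⌊(k.val : ℝ) + 1 / 2⌋₊ = k.val :=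
    (Nat.floor_eq_iff (by positivity)).2 ⟨by linarith, by linarith⟩
  rw [cellIndex, hscale, hfloor, ZMod.natCast_zmod_val]

theorem cellMid_injective : Function.Injective (cellMid N) :=
  Function.LeftInverse.injective cellIndex_cellMid

omit [NeZero N] in
theorem measurable_cellIndex : Measurable (cellIndex N) :=
  (measurable_of_countable _).comp ((Nat.measurable_floor).comp (measurable_mul_const _))

theorem fract_cellMid_add_cellMid (a b : ZMod N) :
    Int.fract (cellMid N a + cellMid N b + 1 / (2 * N)) = cellMid N (a + b + 1) := by
  have hN : (0 : ℝ) < N := Nat.cast_pos.2 (NeZero.pos N)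
  set s := a.val + b.val + 1 with hs_def
  have hs : a + b + 1 = (s : ZMod N) := by simp [s]
  have hdiv : (s : ℝ) = N * (s / N : ℕ) + (s % N : ℕ) := by
    exact_mod_cast (Nat.div_add_mod s N).symm
  have hlt : ((s % N : ℕ) : ℝ) + 1 ≤ N := by exact_mod_cast Nat.mod_lt s (NeZero.pos N)
  have hsplit : cellMid N a + cellMid N b + 1 / (2 * N)
      = ((s / N : ℕ) : ℤ) + cellMid N (a + b + 1) := by
    rw [hs, cellMid, cellMid, cellMid, ZMod.val_natCast, Int.cast_natCast]
    have hsr : (s : ℝ) = a.val + b.val + 1 := by rw [hs_def]; push_cast; ring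
    field_simp
    linear_combination 2 * hdiv - 2 * hsr
  rw [hsplit, Int.fract_intCast_add, Int.fract_eq_self]
  refine ⟨by unfold cellMid; positivity, ?_⟩
  rw [cellMid, hs, ZMod.val_natCast]
  rw [div_add_div _ _ hN.ne' (by positivity), div_lt_one (by positivity)]
  nlinarith

theorem mem_Dq_iff {q : ℕ} {d : ℝ} : d ∈ Dq q ↔ ∃ k : ZMod (2 ^ q), cellMid (2 ^ q) k = d := by
  have hmid : ∀ m : ℕ, (m : ℝ) / 2 ^ q + 1 / 2 ^ (q + 1)
      = (m : ℝ) / ((2 ^ q : ℕ) : ℝ) + 1 / (2 * ((2 ^ q : ℕ) : ℝ)) := by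
    intro m; push_cast; ring
  simp only [Dq, Finset.mem_image, Finset.mem_range, hmid, cellMid]
  constructor
  · rintro ⟨m, hm, rfl⟩
    exact ⟨m, by rw [ZMod.val_natCast_of_lt hm]⟩
  · rintro ⟨k, rfl⟩
    exact ⟨k.val, ZMod.val_lt k, rfl⟩

end Cells

section Discrete

variable {Ω α β : Type*} [MeasurableSpace Ω] {P : Measure Ω}
  [MeasurableSpace α] [MeasurableSingletonClass α] [Countable α]
  [MeasurableSpace β] [MeasurableSingletonClass β] [Countable β]

theorem indepFun_of_measure_inter_preimage_singleton [IsFiniteMeasure P]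
    {X : Ω → α} {Y : Ω → β} (hX : Measurable X) (hY : Measurable Y)
    (h : ∀ a b, P (X ⁻¹' {a} ∩ Y ⁻¹' {b}) = P (X ⁻¹' {a}) * P (Y ⁻¹' {b})) :
    IndepFun X Y P := by
  rw [indepFun_iff_map_prod_eq_prod_map_map hX.aemeasurable hY.aemeasurable]
  refine Measure.ext_of_singleton fun ⟨a, b⟩ => ?_
  rw [← Set.singleton_prod_singleton, Measure.prod_prod,
    Measure.map_apply (hX.prodMk hY) ((measurableSet_singleton a).prod (measurableSet_singleton b)),
    Measure.map_apply hX (measurableSet_singleton a),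
    Measure.map_apply hY (measurableSet_singleton b), Set.mk_preimage_prod, h]

omit [Countable β] in
theorem measure_eq_sum_measure_inter_preimage_singleton [Fintype β] {Y : Ω → β}
    (hY : Measurable Y) (S : Set Ω) : P S = ∑ b, P (S ∩ Y ⁻¹' {b}) := by
  have := sum_measure_preimage_singleton (μ := P.restrict S) (f := Y) Finset.univ
    fun b _ => hY (measurableSet_singleton b)
  simp only [Finset.coe_univ, Set.preimage_univ, Measure.restrict_apply_univ] at this
  rw [← this]
  exact Finset.sum_congr rfl fun b _ => by
    rw [Measure.restrict_apply (hY (measurableSet_singleton b)), Set.inter_comm]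

end Discrete

section FiniteGroup

variable {Ω A β : Type*} [MeasurableSpace Ω] {P : Measure Ω}
  [AddCommGroup A] [Fintype A] [MeasurableSpace A] [MeasurableSingletonClass A]
  [MeasurableSpace β] [MeasurableSingletonClass β] {X : Ω → A} {Y : Ω → β}

theorem measure_add_comp_inter_preimage_singleton (hXY : IndepFun X Y P)
    (hunif : ∀ a, P (X ⁻¹' {a}) = (Fintype.card A : ℝ≥0∞)⁻¹) (f : β → A) (a : A) (b : β) :
    P ((fun ω => X ω + f (Y ω)) ⁻¹' {a} ∩ Y ⁻¹' {b})
      = (Fintype.card A : ℝ≥0∞)⁻¹ * P (Y ⁻¹' {b}) := by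
  have : (fun ω => X ω + f (Y ω)) ⁻¹' {a} ∩ Y ⁻¹' {b} = X ⁻¹' {a - f b} ∩ Y ⁻¹' {b} := by
    ext ω
    simp only [Set.mem_inter_iff, Set.mem_preimage, Set.mem_singleton_iff]
    constructor
    · rintro ⟨h, rfl⟩; exact ⟨eq_sub_of_add_eq h, rfl⟩
    · rintro ⟨h, rfl⟩; exact ⟨by rw [h, sub_add_cancel], rfl⟩
  rw [this, hXY.measure_inter_preimage_eq_mul _ _ (measurableSet_singleton _)
    (measurableSet_singleton _), hunif]

theorem measure_add_comp_preimage_singleton [IsProbabilityMeasure P] [Fintype β]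
    (hXY : IndepFun X Y P) (hY : Measurable Y)
    (hunif : ∀ a, P (X ⁻¹' {a}) = (Fintype.card A : ℝ≥0∞)⁻¹) (f : β → A) (a : A) :
    P ((fun ω => X ω + f (Y ω)) ⁻¹' {a}) = (Fintype.card A : ℝ≥0∞)⁻¹ := by
  rw [measure_eq_sum_measure_inter_preimage_singleton hY, Finset.sum_congr rfl fun b _ =>
    measure_add_comp_inter_preimage_singleton hXY hunif f a b, ← Finset.mul_sum,
    sum_measure_preimage_singleton _ fun b _ => hY (measurableSet_singleton b),
    Finset.coe_univ, Set.preimage_univ, measure_univ, mul_one]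

theorem indepFun_add_comp [IsProbabilityMeasure P] [Fintype β] (hXY : IndepFun X Y P)
    (hX : Measurable X) (hY : Measurable Y)
    (hunif : ∀ a, P (X ⁻¹' {a}) = (Fintype.card A : ℝ≥0∞)⁻¹) (f : β → A) :
    IndepFun (fun ω => X ω + f (Y ω)) Y P :=
  indepFun_of_measure_inter_preimage_singleton (hX.add ((measurable_of_finite f).comp hY)) hY
    fun a b => by
      rw [measure_add_comp_inter_preimage_singleton hXY hunif,
        measure_add_comp_preimage_singleton hXY hY hunif]

theorem ProbabilityTheory.iIndepFun.indepFun_add_add_of_uniform [IsProbabilityMeasure P]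
    {ι : Type*} {K : ι → Ω → A} (hK : iIndepFun K P) (hmeas : ∀ i, Measurable (K i))
    (hunif : ∀ i a, P (K i ⁻¹' {a}) = (Fintype.card A : ℝ≥0∞)⁻¹) {a b c d : ι}
    (hab : a ≠ b) (had : a ≠ d) (hbc : b ≠ c) (hne : a ≠ c ∨ b ≠ d) :
    IndepFun (fun ω => K a ω + K b ω) (fun ω => K c ω + K d ω) P := by
  have hsum : Measurable fun y : A × A => y.1 + y.2 := measurable_of_finite _
  by_cases hac : a = c
  · subst hac
    have hbd := hne.resolve_left (not_not.2 rfl)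
    have := (indepFun_add_comp (hK.indepFun_prodMk hmeas a d b hab hbd.symm).symm (hmeas b)
      ((hmeas a).prodMk (hmeas d)) (hunif b) Prod.fst).comp measurable_id hsum
    simp only [add_comm (K b _), Function.id_comp] at this
    exact this
  by_cases hbd : b = d
  · subst hbd
    have := (indepFun_add_comp (hK.indepFun_prodMk hmeas b c a hab.symm (Ne.symm hac)).symm
      (hmeas a) ((hmeas b).prodMk (hmeas c)) (hunif a) Prod.fst).comp measurable_id
      (measurable_of_finite fun y : A × A => y.2 + y.1)
    exact this
  exact (hK.indepFun_prodMk_prodMk hmeas a b c d hac had hbc hbd).comp hsum hsum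

theorem ProbabilityTheory.iIndepFun.bakhvalov [IsProbabilityMeasure P] {ι κ₁ κ₂ : Type*}
    {K : ι → Ω → A} (hK : iIndepFun K P) (hmeas : ∀ i, Measurable (K i))
    (hunif : ∀ i a, P (K i ⁻¹' {a}) = (Fintype.card A : ℝ≥0∞)⁻¹)
    {a : κ₁ → ι} {b : κ₂ → ι} (ha : Function.Injective a) (hb : Function.Injective b)
    (hab : ∀ i j, a i ≠ b j) (c : A) :
    (∀ p p' : κ₁ × κ₂, p ≠ p' → IndepFun (fun ω => K (a p.1) ω + K (b p.2) ω + c)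
      (fun ω => K (a p'.1) ω + K (b p'.2) ω + c) P) ∧
    ∀ (p : κ₁ × κ₂) (x : A),
      P ((fun ω => K (a p.1) ω + K (b p.2) ω + c) ⁻¹' {x}) = (Fintype.card A : ℝ≥0∞)⁻¹ := by
  refine ⟨fun p p' hp => ?_, fun p x => ?_⟩
  · have hne : a p.1 ≠ a p'.1 ∨ b p.2 ≠ b p'.2 := by
      by_contra! h
      exact hp (Prod.ext (ha h.1) (hb h.2))
    exact (hK.indepFun_add_add_of_uniform hmeas hunif (hab _ _) (hab _ _) (hab _ _).symm
      hne).comp (measurable_of_finite (· + c)) (measurable_of_finite (· + c))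
  · simpa only [add_assoc] using measure_add_comp_preimage_singleton
      (hK.indepFun (hab p.1 p.2)) (hmeas _) (hunif _) (· + c) x

end FiniteGroup

section GridValued

variable {Ω : Type*} [MeasurableSpace Ω] {P : Measure Ω} {N : ℕ} [NeZero N]

theorem measure_preimage_cellMid_of_ae_eq {Z : Ω → ℝ} {S : Ω → ZMod N}
    (h : Z =ᵐ[P] fun ω => cellMid N (S ω)) (k : ZMod N) :
    P (Z ⁻¹' {cellMid N k}) = P (S ⁻¹' {k}) := by
  refine measure_congr ?_
  filter_upwards [h] with ω hω
  show (Z ω = cellMid N k) = (S ω = k)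
  rw [hω, cellMid_injective.eq_iff]

theorem ae_eq_cellMid_cellIndex [IsProbabilityMeasure P] {G : Ω → ℝ} (hG : Measurable G)
    (hunif : ∀ k, P (G ⁻¹' {cellMid N k}) = (N : ℝ≥0∞)⁻¹) :
    G =ᵐ[P] fun ω => cellMid N (cellIndex N (G ω)) := by
  set D := Finset.univ.image (cellMid N)
  have hD : P (G ⁻¹' D) = 1 := by
    rw [← sum_measure_preimage_singleton _ fun _ _ => hG (measurableSet_singleton _),
      Finset.sum_image fun _ _ _ _ h => cellMid_injective h]
    simp only [hunif, Finset.sum_const, Finset.card_univ, ZMod.card, nsmul_eq_mul]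
    exact ENNReal.mul_inv_cancel (by simp [NeZero.ne N]) (by simp)
  have hmem : ∀ᵐ ω ∂P, G ω ∈ D :=
    (ae_iff_measure_eq (hG D.measurableSet).nullMeasurableSet).2 (hD.trans measure_univ.symm)
  filter_upwards [hmem] with ω hω
  obtain ⟨k, -, hk⟩ := Finset.mem_image.1 hω
  rw [← hk, cellIndex_cellMid]

end GridValued

/-- Bakhvalov's trick: from an independent family `(G_j)_{j=1,…,2n}`, each uniform on
`D^(q)`, the family `H_{(j1,j2)} = G_{j1} + G_{j2+n} + 2^{-(q+1)} mod 1`, for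
`j1, j2 ∈ {1,…,n}`, is pairwise independent with each member uniform on `D^(q)`. -/
theorem stmt_2 {Ω : Type*} [MeasurableSpace Ω] (P : MeasureTheory.Measure Ω)
    [MeasureTheory.IsProbabilityMeasure P] (q n : ℕ)
    (G : Fin (2 * n) → Ω → ℝ) (hGmeas : ∀ j, Measurable (G j))
    (hindep : iIndepFun (m := fun _ => (inferInstance : MeasurableSpace ℝ)) G P)
    (hunif : ∀ j, ∀ d ∈ Dq q, P {ω | G j ω = d} = 1 / 2 ^ q)
    (H : Fin n × Fin n → Ω → ℝ)
    (hH : ∀ p : Fin n × Fin n, ∀ ω,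
      H p ω = Int.fract (G ⟨p.1, by omega⟩ ω + G ⟨p.2 + n, by omega⟩ ω + 1 / 2 ^ (q + 1))) :
    (∀ p p' : Fin n × Fin n, p ≠ p' → IndepFun (H p) (H p') P) ∧
      (∀ p : Fin n × Fin n, ∀ d ∈ Dq q, P {ω | H p ω = d} = 1 / 2 ^ q) := by
  let K : Fin (2 * n) → Ω → ZMod (2 ^ q) := fun j ω => cellIndex (2 ^ q) (G j ω)
  let a : Fin n → Fin (2 * n) := fun i => ⟨i, by omega⟩
  let b : Fin n → Fin (2 * n) := fun i => ⟨i + n, by omega⟩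
  have hunifG : ∀ j k, P (G j ⁻¹' {cellMid (2 ^ q) k}) = ((2 ^ q : ℕ) : ℝ≥0∞)⁻¹ := fun j k => by
    rw [← one_div, Nat.cast_pow, Nat.cast_ofNat]
    exact hunif j _ (mem_Dq_iff.2 ⟨k, rfl⟩)
  have hGK : ∀ j, G j =ᵐ[P] fun ω => cellMid (2 ^ q) (K j ω) := fun j =>
    ae_eq_cellMid_cellIndex (hGmeas j) (hunifG j)
  have hHK : ∀ p, H p =ᵐ[P] fun ω => cellMid (2 ^ q) (K (a p.1) ω + K (b p.2) ω + 1) := by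
    intro p
    filter_upwards [hGK (a p.1), hGK (b p.2)] with ω h1 h2
    have hhalf : (1 : ℝ) / 2 ^ (q + 1) = 1 / (2 * ((2 ^ q : ℕ) : ℝ)) := by push_cast; ring
    rw [hH, h1, h2, hhalf, fract_cellMid_add_cellMid]
  have hK : iIndepFun K P := hindep.comp _ fun _ => measurable_cellIndex
  obtain ⟨hindepS, hunifS⟩ := hK.bakhvalov
    (fun j => measurable_cellIndex.comp (hGmeas j))
    (fun j k => by rw [ZMod.card, ← measure_preimage_cellMid_of_ae_eq (hGK j), hunifG])
    (a := a) (b := b) (fun i j h => Fin.ext (Fin.mk.inj_iff.1 h))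
    (fun i j h => Fin.ext (Nat.add_right_cancel (Fin.mk.inj_iff.1 h)))
    (fun i j h => by have := Fin.mk.inj_iff.1 h; omega) 1
  refine ⟨fun p p' hp => ?_, fun p d hd => ?_⟩
  · exact ((hindepS p p' hp).comp (measurable_of_countable (cellMid _))
      (measurable_of_countable (cellMid _))).congr (hHK p).symm (hHK p').symm
  · obtain ⟨k, rfl⟩ := mem_Dq_iff.1 hd
    have := (measure_preimage_cellMid_of_ae_eq (hHK p) k).trans (hunifS p k)
    rwa [ZMod.card, Nat.cast_pow, Nat.cast_ofNat, ← one_div] at this
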